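/- Let n ≥ 1, let H : ℝⁿ → ℝ be continuous, let a, b ∈ ℝⁿ with a ≠ b, let c ∈ ℝ, and suppose H(ta + (1−t)b) = c for all t ∈ [0,1]. Let f : ℝ → ℝ be Lipschitz continuous with some constant L < 1, and define u : ℝⁿ → ℝ by u(x) = ((b+a)/2)·x + f(((b−a)/2)·x). Then u is an almost-everywhere solution of the Hamilton–Jacobi equation H(Du) = c: for Lebesgue-almost every x ∈ ℝⁿ, u is differentiable at x, the gradient ∇u(x) lies in the closed segment [a,b], and H(∇u(x)) = c. -/

import Mathlib

/-!
Write `v = (b + a)/2` and `w = (b - a)/2`, so that `u x = ⟪v, x⟫ + f ⟪w, x⟫`. The function `u` is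
Lipschitz, hence differentiable almost everywhere by Rademacher's theorem. Where `u` is
differentiable, so is `f` at `⟪w, x⟫` (restrict `u` to a line along `w`), and the chain rule gives
`∇u x = v + f' ⟪w, x⟫ • w`. Since `|f'| ≤ L < 1`, this is the point `t • a + (1 - t) • b` of the
segment with `t = (1 - f')/2 ∈ [0, 1]`, where `H` takes the value `c`.
-/

open scoped RealInnerProductSpace NNReal

section InnerAddCompInner

variable {E : Type*} [NormedAddCommGroup E] [InnerProductSpace ℝ E] {f : ℝ → ℝ}

theorem LipschitzWith.inner_add_comp_inner {K : ℝ≥0} (hf : LipschitzWith K f) (v w : E) :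
    LipschitzWith (‖v‖₊ + K * ‖w‖₊) (fun x => ⟪v, x⟫ + f ⟪w, x⟫) := by
  have hinner (z : E) : LipschitzWith ‖z‖₊ (innerSL ℝ z) := by
    have hnorm : ‖innerSL ℝ z‖₊ = ‖z‖₊ := NNReal.eq (innerSL_apply_norm ℝ z)
    exact hnorm ▸ (innerSL ℝ z).lipschitz
  exact (hinner v).add (hf.comp (hinner w))

theorem differentiableAt_comp_inner_of_differentiableAt_inner_add {v w x : E} (hw : w ≠ 0)
    (hu : DifferentiableAt ℝ (fun x => ⟪v, x⟫ + f ⟪w, x⟫) x) :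
    DifferentiableAt ℝ f ⟪w, x⟫ := by
  set s := ⟪w, x⟫
  have hw2 : ‖w‖ ^ 2 ≠ 0 := by positivity
  -- the affine line through `x` along `w`, parametrized by the value of `⟪w, ·⟫`
  set φ : ℝ → E := fun t => x + ((t - s) / ‖w‖ ^ 2) • w
  have hφs : φ s = x := by simp [φ]
  have hinner_φ (t : ℝ) : ⟪w, φ t⟫ = t := by
    simp only [φ, inner_add_right, real_inner_smul_right, real_inner_self_eq_norm_sq,
      div_mul_cancel₀ _ hw2, s]
    ring
  have hφ : DifferentiableAt ℝ φ s := by fun_prop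
  have hf_eq : f = fun t => (⟪v, φ t⟫ + f ⟪w, φ t⟫) - ⟪v, φ t⟫ := by
    funext t
    simp [hinner_φ]
  rw [hf_eq]
  exact ((hφs ▸ hu).comp s hφ).sub ((innerSL ℝ v).differentiableAt.comp s hφ)

theorem hasGradientAt_inner_add_comp_inner [CompleteSpace E] {v w x : E} {d : ℝ}
    (hf : HasDerivAt f d ⟪w, x⟫) :
    HasGradientAt (fun x => ⟪v, x⟫ + f ⟪w, x⟫) (v + d • w) x := by
  rw [hasGradientAt_iff_hasFDerivAt]
  refine ((innerSL ℝ v).hasFDerivAt.add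
    (hf.comp_hasFDerivAt x (innerSL ℝ w).hasFDerivAt)).congr_fderiv ?_
  ext y
  simp [InnerProductSpace.toDual_apply_apply]

theorem ae_exists_hasGradientAt_inner_add_comp_inner [FiniteDimensional ℝ E]
    [MeasurableSpace E] [BorelSpace E] (μ : MeasureTheory.Measure E) [μ.IsAddHaarMeasure]
    (v : E) {w : E} {K : ℝ≥0} (hf : LipschitzWith K f) (hw : w ≠ 0) :
    ∀ᵐ x ∂μ, ∃ d : ℝ, |d| ≤ K ∧ HasGradientAt (fun x => ⟪v, x⟫ + f ⟪w, x⟫) (v + d • w) x := by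
  filter_upwards [(hf.inner_add_comp_inner v w).ae_differentiableAt (μ := μ)] with x hx
  have hfx := differentiableAt_comp_inner_of_differentiableAt_inner_add hw hx
  exact ⟨deriv f ⟪w, x⟫, norm_deriv_le_of_lipschitz hf,
    hasGradientAt_inner_add_comp_inner hfx.hasDerivAt⟩

end InnerAddCompInner

theorem exists_mem_Icc_half_add_smul_half_sub_eq {E : Type*} [AddCommGroup E] [Module ℝ E]
    (a b : E) {d : ℝ} (hd : |d| ≤ 1) :
    ∃ t ∈ Set.Icc (0 : ℝ) 1,
      (2 : ℝ)⁻¹ • (b + a) + d • (2 : ℝ)⁻¹ • (b - a) = t • a + (1 - t) • b := by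
  obtain ⟨hd₁, hd₂⟩ := abs_le.1 hd
  refine ⟨(1 - d) / 2, ⟨by linarith, by linarith⟩, ?_⟩
  module

theorem stmt_10_general (n : ℕ) (H : EuclideanSpace ℝ (Fin n) → ℝ)
    (a b : EuclideanSpace ℝ (Fin n)) (hab : a ≠ b) (c : ℝ)
    (hconst : ∀ t : ℝ, t ∈ Set.Icc (0:ℝ) 1 → H (t • a + (1 - t) • b) = c)
    (L : ℝ) (hL : L < 1) (f : ℝ → ℝ)
    (hf : ∀ s t : ℝ, |f s - f t| ≤ L * |s - t|)
    (u : EuclideanSpace ℝ (Fin n) → ℝ)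
    (hu : ∀ x, u x = ⟪(2:ℝ)⁻¹ • (b + a), x⟫ + f ⟪(2:ℝ)⁻¹ • (b - a), x⟫) :
    ∀ᵐ x ∂(MeasureTheory.volume : MeasureTheory.Measure (EuclideanSpace ℝ (Fin n))),
      DifferentiableAt ℝ u x ∧ gradient u x ∈ segment ℝ a b ∧
        H (gradient u x) = c := by
  have hf_lip : LipschitzWith L.toNNReal f := .of_dist_le' hf
  have hw : (2:ℝ)⁻¹ • (b - a) ≠ 0 := smul_ne_zero (by norm_num) (sub_ne_zero.2 hab.symm)
  rw [show u = _ from funext hu]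
  filter_upwards [ae_exists_hasGradientAt_inner_add_comp_inner _ ((2:ℝ)⁻¹ • (b + a)) hf_lip hw]
    with x ⟨d, hd, hgrad⟩
  have hd₁ : |d| ≤ 1 := hd.trans (by simpa using hL.le)
  obtain ⟨t, ht, hgrad_eq⟩ := exists_mem_Icc_half_add_smul_half_sub_eq a b hd₁
  rw [hgrad.gradient, hgrad_eq]
  exact ⟨hgrad.differentiableAt, ⟨t, 1 - t, ht.1, by linarith [ht.2], by ring, rfl⟩,
    hconst t ht⟩

theorem stmt_10 (n : ℕ) (hn : 1 ≤ n) (H : EuclideanSpace ℝ (Fin n) → ℝ)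
    (hH : Continuous H) (a b : EuclideanSpace ℝ (Fin n)) (hab : a ≠ b) (c : ℝ)
    (hconst : ∀ t : ℝ, t ∈ Set.Icc (0:ℝ) 1 → H (t • a + (1 - t) • b) = c)
    (L : ℝ) (hL : L < 1) (f : ℝ → ℝ)
    (hf : ∀ s t : ℝ, |f s - f t| ≤ L * |s - t|)
    (u : EuclideanSpace ℝ (Fin n) → ℝ)
    (hu : ∀ x, u x = ⟪(2:ℝ)⁻¹ • (b + a), x⟫ + f ⟪(2:ℝ)⁻¹ • (b - a), x⟫) :
    ∀ᵐ x ∂(MeasureTheory.volume : MeasureTheory.Measure (EuclideanSpace ℝ (Fin n))),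
      DifferentiableAt ℝ u x ∧ gradient u x ∈ segment ℝ a b ∧
        H (gradient u x) = c :=
  stmt_10_general n H a b hab c hconst L hL f hf u hu
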